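/- arXiv:1704.00807 — 3 statements merged into one kernel-verified Lean document; each statement's English description precedes it below -/
import Mathlib

section
/- RSD satisfies the identity of indiscernibles: RSD(S₁, S₂) = 0 if and only if S₁ = S₂. -/
open scoped Classical

variable {α : Type*}

def EditStep (x y : List α) : Prop :=
  (∃ (a : α) (l r : List α), x = l ++ r ∧ y = l ++ a :: r) ∨
  (∃ (a : α) (l r : List α), x = l ++ a :: r ∧ y = l ++ r)

def EditChain : ℕ → List α → List α → Prop
  | 0, x, y => x = y
  | n+1, x, y => ∃ z, EditStep x z ∧ EditChain n z y

/-- Edit distance: minimum number of single-symbol insertions and deletions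
transforming `x` into `y`. -/
noncomputable def ED (x y : List α) : ℕ := sInf {n | EditChain n x y}

/-- Length of a longest common subsequence. -/
noncomputable def LCS (x y : List α) : ℕ :=
  sSup {n | ∃ z : List α, z.length = n ∧ z.Sublist x ∧ z.Sublist y}

/-- The length-`k` suffix of `S`, padded on the left with `none` (the symbol `⊥ ∉ Σ`)
if `k > |S|`. -/
def padSuffix (S : List α) (k : ℕ) : List (Option α) :=
  List.replicate (k - S.length) none ++ (S.map some).drop (S.length - k)

/-- Relative suffix distance. -/
noncomputable def RSD (S S' : List α) : ℝ :=
  ⨆ k : ℕ+, (ED (padSuffix S k) (padSuffix S' k) : ℝ) / (2 * ((k : ℕ) : ℝ))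

/-- The factor `S[i, j)` of `S` (1-based indices). -/
def factor (S : List α) (i j : ℕ) : List α := (S.drop (i - 1)).take (j - i)

/-- `S` is an ε-synchronization string. -/
def IsSyncString (ε : ℝ) (S : List α) : Prop :=
  ∀ i j k : ℕ, 1 ≤ i → i < j → j < k → k ≤ S.length + 1 →
    (1 - ε) * ((k : ℝ) - (i : ℝ)) < (ED (factor S i j) (factor S j k) : ℝ)

/-- Monotone matching between `S` and `S'` (1-based indices). -/
def IsMatching (S S' : List α) (M : List (ℕ × ℕ)) : Prop :=
  M.Chain' (fun p q => p.1 < q.1 ∧ p.2 < q.2) ∧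
  ∀ p ∈ M, 1 ≤ p.1 ∧ p.1 ≤ S.length ∧ 1 ≤ p.2 ∧ p.2 ≤ S'.length ∧
    S[p.1 - 1]? = S'[p.2 - 1]?

/-- `T` satisfies the ε-self-matching property. -/
def HasSelfMatchingProp (ε : ℝ) (T : List α) : Prop :=
  ∀ M : List (ℕ × ℕ), IsMatching T T M →
    ((M.filter (fun p => p.1 ≠ p.2)).length : ℝ) < ε * (T.length : ℝ)

/-- Index `k` of `S` is ε-bad (1-based). -/
def BadIndex (ε : ℝ) (S : List α) (k : ℕ) : Prop :=
  ∃ i j, 1 ≤ i ∧ i ≤ k ∧ k ≤ j ∧ j ≤ S.length ∧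
    ¬ HasSelfMatchingProp ε (factor S i (j + 1))

/-- Number of ε-bad indices of `S`. -/
noncomputable def badCount (ε : ℝ) (S : List α) : ℕ :=
  ((Finset.Icc 1 S.length).filter fun k => BadIndex ε S k).card

/-!
Taking `k ≥ max |S₁| |S₂|`, the padded suffixes of length `k` are the whole strings preceded
by `⊥`s, so `S₁` and `S₂` are recovered from them by erasing the padding. Since every term of
the supremum defining RSD lies in `[0, 1]`, `RSD S₁ S₂ = 0` forces each of these padded
suffixes to be at edit distance `0`, i.e. equal.
-/

lemma EditStep.cons (a : α) {x y : List α} (h : EditStep x y) :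
    EditStep (a :: x) (a :: y) := by
  rcases h with ⟨b, l, r, rfl, rfl⟩ | ⟨b, l, r, rfl, rfl⟩
  · exact Or.inl ⟨b, a :: l, r, rfl, rfl⟩
  · exact Or.inr ⟨b, a :: l, r, rfl, rfl⟩

lemma EditChain.cons (a : α) :
    ∀ {n : ℕ} {x y : List α}, EditChain n x y → EditChain n (a :: x) (a :: y)
  | 0, _, _, h => congrArg (a :: ·) h
  | _ + 1, _, _, ⟨z, hxz, hzy⟩ => ⟨a :: z, hxz.cons a, hzy.cons a⟩

lemma editChain_nil_left (y : List α) : EditChain y.length [] y := by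
  induction y with
  | nil => rfl
  | cons a t ih => exact ⟨[a], Or.inl ⟨a, [], [], rfl, rfl⟩, ih.cons a⟩

lemma editChain_length_add_length (x y : List α) : EditChain (x.length + y.length) x y := by
  induction x with
  | nil => simpa using editChain_nil_left y
  | cons a t ih =>
    rw [List.length_cons, Nat.add_right_comm]
    exact ⟨t, Or.inr ⟨a, [], t, rfl, rfl⟩, ih⟩

lemma ED_le_length_add_length (x y : List α) : ED x y ≤ x.length + y.length :=
  Nat.sInf_le (editChain_length_add_length x y)

lemma ED_eq_zero_iff {x y : List α} : ED x y = 0 ↔ x = y := by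
  refine ⟨fun h => ?_, fun h => Nat.le_zero.mp (Nat.sInf_le (show EditChain 0 x y from h))⟩
  rcases Nat.sInf_eq_zero.mp h with h0 | hempty
  · exact h0
  · exact (Set.eq_empty_iff_forall_notMem.mp hempty _ (editChain_length_add_length x y)).elim

lemma padSuffix_length (S : List α) (k : ℕ) : (padSuffix S k).length = k := by
  simp only [padSuffix, List.length_append, List.length_replicate, List.length_drop,
    List.length_map]
  omega

lemma filterMap_padSuffix_of_length_le {S : List α} {k : ℕ} (h : S.length ≤ k) :
    (padSuffix S k).filterMap id = S := by
  simp [padSuffix, Nat.sub_eq_zero_of_le h]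

lemma ED_padSuffix_le (S S' : List α) (k : ℕ) :
    ED (padSuffix S k) (padSuffix S' k) ≤ 2 * k := by
  have := ED_le_length_add_length (padSuffix S k) (padSuffix S' k)
  rw [padSuffix_length, padSuffix_length] at this
  omega

lemma RSD_eq_zero_iff_forall_ED_eq_zero {S S' : List α} :
    RSD S S' = 0 ↔ ∀ k : ℕ+, ED (padSuffix S k) (padSuffix S' k) = 0 := by
  have hpos (k : ℕ+) : (0 : ℝ) < 2 * ((k : ℕ) : ℝ) := by positivity
  have hbdd : BddAbove (Set.range fun k : ℕ+ =>
      (ED (padSuffix S k) (padSuffix S' k) : ℝ) / (2 * ((k : ℕ) : ℝ))) := by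
    refine ⟨1, ?_⟩
    rintro _ ⟨k, rfl⟩
    rw [div_le_one (hpos k)]
    exact_mod_cast ED_padSuffix_le S S' k
  constructor
  · intro h k
    have hterm : (ED (padSuffix S k) (padSuffix S' k) : ℝ) / (2 * ((k : ℕ) : ℝ)) = 0 :=
      le_antisymm (h ▸ le_ciSup hbdd k) (by positivity)
    simpa [(hpos k).ne'] using hterm
  · intro h
    simp [RSD, h]

theorem rsd_eq_zero_iff (S₁ S₂ : List α) : RSD S₁ S₂ = 0 ↔ S₁ = S₂ := by
  rw [RSD_eq_zero_iff_forall_ED_eq_zero]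
  refine ⟨fun h => ?_, fun h k => ED_eq_zero_iff.mpr (h ▸ rfl)⟩
  let k : ℕ+ := ⟨S₁.length + S₂.length + 1, Nat.succ_pos _⟩
  have hpad : padSuffix S₁ k = padSuffix S₂ k := ED_eq_zero_iff.mp (h k)
  calc S₁ = (padSuffix S₁ k).filterMap id :=
        (filterMap_padSuffix_of_length_le (by simp [k]; omega)).symm
    _ = (padSuffix S₂ k).filterMap id := by rw [hpad]
    _ = S₂ := filterMap_padSuffix_of_length_le (by simp [k]; omega)
end

section
/- There is no ε-synchronization string of length at least ⌈1/ε⌉ + 1 over an alphabet of size smaller than ⌈1/ε⌉. -/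
open scoped Classical

variable {α : Type*}

/-!
Among the first `⌈1/ε⌉` symbols of `S` two coincide, say `S[u] = S[v] = a` with `u < v`.
The block `S[u] ⋯ S[v-1]` is `a` followed by `v - u - 1` symbols, and deleting these turns it
into the next block `S[v] = a`. So two adjacent factors spanning `v - u + 1` positions are at
edit distance at most `v - u - 1`, which the synchronization bound forbids once
`ε (v - u + 1) ≤ 2`; and `ε ⌈1/ε⌉ < 1 + ε < 2`.
-/

theorem ED_le_of_editChain {x y : List α} {n : ℕ} (h : EditChain n x y) : ED x y ≤ n :=
  Nat.sInf_le h

theorem editChain_append_length (l r : List α) : EditChain r.length (l ++ r) l := by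
  induction r with
  | nil => exact List.append_nil l
  | cons a r ih => exact ⟨l ++ r, Or.inr ⟨a, l, r, rfl, rfl⟩, ih⟩

theorem ED_append_le_length (l r : List α) : ED (l ++ r) l ≤ r.length :=
  ED_le_of_editChain (editChain_append_length l r)

@[simp]
theorem factor_self (S : List α) (i : ℕ) : factor S i i = [] := by
  simp [factor]

section factor

variable {S : List α}

theorem factor_succ_eq_cons {u j : ℕ} (hu : u < S.length) (huj : u + 1 < j) :
    factor S (u + 1) j = S[u] :: factor S (u + 2) j := by
  rw [factor, factor, Nat.add_sub_cancel, List.drop_eq_getElem_cons hu,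
    show j - (u + 1) = (j - (u + 2)) + 1 by omega, List.take_succ_cons]
  rfl

theorem length_factor {i j : ℕ} (hi : 1 ≤ i) (hij : i ≤ j) (hj : j ≤ S.length + 1) :
    (factor S i j).length = j - i := by
  simp only [factor, List.length_take, List.length_drop]
  omega

end factor

namespace IsSyncString

variable {ε : ℝ} {S : List α}

theorem two_lt_mul_of_getElem_eq (hS : IsSyncString ε S) {u v : ℕ} (huv : u < v)
    (hv : v < S.length) (heq : S[u] = S[v]) : 2 < ε * ((v : ℝ) - u + 1) := by
  have hED : ED (factor S (u + 1) (v + 1)) (factor S (v + 1) (v + 2)) + (u + 1) ≤ v := by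
    rw [factor_succ_eq_cons (huv.trans hv) (by omega), factor_succ_eq_cons hv (by omega),
      factor_self, heq]
    have hdel := ED_append_le_length [S[v]] (factor S (u + 2) (v + 1))
    rw [List.singleton_append, length_factor (by omega) (by omega) (by omega)] at hdel
    omega
  have hsync := hS (u + 1) (v + 1) (v + 2) (by omega) (by omega) (by omega) (by omega)
  have hEDr : (ED (factor S (u + 1) (v + 1)) (factor S (v + 1) (v + 2)) : ℝ) + (u + 1) ≤ v := by
    exact_mod_cast hED
  push_cast at hsync
  linarith

theorem nodup_take (hS : IsSyncString ε S) {m : ℕ} (hm : ε * m ≤ 2) : (S.take m).Nodup := by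
  rw [List.Nodup, List.pairwise_iff_getElem]
  intro i j hi hj hij heq
  simp only [List.length_take, List.getElem_take, lt_min_iff] at hi hj heq
  have hlt := hS.two_lt_mul_of_getElem_eq hij hj.2 heq
  have hij' : (i : ℝ) < j := by exact_mod_cast hij
  have hjm : (j : ℝ) + 1 ≤ m := by exact_mod_cast hj.1
  nlinarith [(Nat.cast_nonneg i : (0 : ℝ) ≤ i)]

end IsSyncString

theorem no_sync_over_small_alphabet {α : Type*} [Fintype α] (ε : ℝ)
    (hε0 : 0 < ε) (hε1 : ε < 1) (hcard : Fintype.card α < ⌈1 / ε⌉₊)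
    (S : List α) (hlen : ⌈1 / ε⌉₊ + 1 ≤ S.length) :
    ¬ IsSyncString ε S := by
  intro hS
  have hεm : ε * ⌈1 / ε⌉₊ ≤ 2 := by
    have hceil : (⌈1 / ε⌉₊ : ℝ) < 1 / ε + 1 := Nat.ceil_lt_add_one (by positivity)
    have : ε * (1 / ε + 1) = 1 + ε := by field_simp
    nlinarith
  have hcard' := (hS.nodup_take hεm).length_le_card
  rw [List.length_take, min_eq_left (by omega)] at hcard'
  omega
end

section
/- Any string of length l > 100m which contains a monotone self-matching with at least εl bad pairs contains two sub-intervals I₁ and I₂ of length m such that there is a monotone matching of size at least 0.99·mε/2 between I₁ and I₂. -/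
open scoped Classical

variable {α : Type*}

/-! Cut the string into consecutive blocks of length `m`. The block pairs `(s, t)` visited by a
monotone matching form a chain in the product order, so there are at most `2⌈l/m⌉ - 1` of them,
and by pigeonhole one block pair carries at least `|M| / (2⌈l/m⌉ - 1) ≥ 0.99 · m ε / 2` edges.
A block pair is then covered by two windows of length exactly `m` inside the string (the last
block may be shorter than `m`, so its window is shifted left). -/

open Finset

theorem List.Pairwise.isChain_setOf {β : Type*} {r : β → β → Prop} {l : List β}
    (h : l.Pairwise r) : _root_.IsChain r {x | x ∈ l} := by
  have : Std.Symm (fun a b : β => r a b ∨ r b a) := ⟨fun _ _ => Or.symm⟩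
  have h' : l.Pairwise fun a b => r a b ∨ r b a := h.imp Or.inl
  exact fun a ha b hb hne => h'.forall ha hb hne

/-- Distinct elements of a chain have distinct coordinate sums. -/
theorem card_le_of_isChain_of_forall_le {s : Finset (ℕ × ℕ)} (a : ℕ × ℕ)
    (hs : IsChain (· ≤ ·) (s : Set (ℕ × ℕ))) (hle : ∀ x ∈ s, x ≤ a) :
    #s ≤ a.1 + a.2 + 1 := by
  have hinj : Set.InjOn (fun x : ℕ × ℕ => x.1 + x.2) s := by
    intro x hx y hy hsum
    by_contra hne
    have hxy := hs hx hy hne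
    simp only [Prod.le_def] at hxy hsum
    exact hne (Prod.ext (by omega) (by omega))
  calc #s = #(s.image fun x : ℕ × ℕ => x.1 + x.2) := (card_image_of_injOn hinj).symm
    _ ≤ #(range (a.1 + a.2 + 1)) := by
      refine card_le_card fun n hn => ?_
      obtain ⟨x, hx, rfl⟩ := mem_image.1 hn
      have hxa := Prod.le_def.1 (hle x hx)
      rw [mem_range]
      omega
    _ = a.1 + a.2 + 1 := card_range _

theorem List.Nodup.exists_le_length_filter_of_nsmul_le {β γ R : Type*} [CommSemiring R]
    [LinearOrder R] [IsStrictOrderedRing R] [DecidableEq γ] {l : List β} (hl : l.Nodup) {f : β → γ}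
    {t : Finset γ} (hf : ∀ a ∈ l, f a ∈ t) (ht : t.Nonempty) {b : R}
    (hb : #t • b ≤ l.length) : ∃ y ∈ t, b ≤ (l.filter (f · = y)).length := by
  rw [← List.toFinset_card_of_nodup hl] at hb
  obtain ⟨y, hy, hfiber⟩ := exists_le_card_fiber_of_nsmul_le_card_of_maps_to
    (fun a ha => hf a (List.mem_toFinset.1 ha)) ht hb
  refine ⟨y, hy, ?_⟩
  rw [← List.toFinset_card_of_nodup (hl.filter _), List.toFinset_filter]
  simpa using hfiber

/-- The (0-based) index of the block of length `m` that contains the 1-based position `i`. -/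
def block (m i : ℕ) : ℕ := (i - 1) / m

theorem block_mono (m : ℕ) : Monotone (block m) :=
  fun _ _ h => Nat.div_le_div_right (Nat.sub_le_sub_right h 1)

theorem exists_window_of_block {l m : ℕ} (hm : 0 < m) (hml : m ≤ l) (k : ℕ) :
    ∃ p, 1 ≤ p ∧ p + m ≤ l + 1 ∧ ∀ i, 1 ≤ i → i ≤ l → block m i = k → p ≤ i ∧ i < p + m := by
  refine ⟨min (m * k + 1) (l + 1 - m), by omega, by omega, fun i hi hil hk => ?_⟩
  have hdiv := Nat.div_add_mod (i - 1) m
  have hmod := Nat.mod_lt (i - 1) hm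
  rw [← block, hk] at hdiv
  omega

section

variable {S S' : List α} {M : List (ℕ × ℕ)}

theorem IsMatching.pairwise (hM : IsMatching S S' M) :
    M.Pairwise fun p q => p.1 < q.1 ∧ p.2 < q.2 :=
  have : Trans (fun p q : ℕ × ℕ => p.1 < q.1 ∧ p.2 < q.2)
      (fun p q : ℕ × ℕ => p.1 < q.1 ∧ p.2 < q.2) (fun p q : ℕ × ℕ => p.1 < q.1 ∧ p.2 < q.2) :=
    ⟨fun h h' => ⟨h.1.trans h'.1, h.2.trans h'.2⟩⟩
  hM.1.pairwise

theorem IsMatching.sublist {M' : List (ℕ × ℕ)} (hM : IsMatching S S' M) (h : M'.Sublist M) :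
    IsMatching S S' M' :=
  ⟨(hM.pairwise.sublist h).isChain, fun p hp => hM.2 p (h.subset hp)⟩

theorem IsMatching.pairwise_lt (hM : IsMatching S S' M) : M.Pairwise (· < ·) :=
  hM.pairwise.imp fun h => Prod.lt_iff.2 (Or.inl ⟨h.1, h.2.le⟩)

theorem IsMatching.card_image_block_le (hM : IsMatching S S' M) (m : ℕ) :
    #(M.toFinset.image (Prod.map (block m) (block m))) ≤
      block m S.length + block m S'.length + 1 := by
  refine card_le_of_isChain_of_forall_le (block m S.length, block m S'.length) ?_ ?_
  · rw [coe_image, List.coe_toFinset]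
    exact ((block_mono m).prodMap (block_mono m)).isChain_image
      (hM.pairwise_lt.imp le_of_lt).isChain_setOf
  · simp only [mem_image, List.mem_toFinset]
    rintro _ ⟨pr, hpr, rfl⟩
    obtain ⟨-, h1, -, h2, -⟩ := hM.2 pr hpr
    exact ⟨block_mono m h1, block_mono m h2⟩

theorem IsMatching.exists_le_length_filter_block {b : ℝ} (hM : IsMatching S S' M) (m : ℕ)
    (hMne : M ≠ []) (hb₀ : 0 ≤ b)
    (hb : ((block m S.length + block m S'.length + 1 : ℕ) : ℝ) * b ≤ M.length) :
    ∃ k, b ≤ (M.filter (Prod.map (block m) (block m) · = k)).length := by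
  have hcard : ((#(M.toFinset.image (Prod.map (block m) (block m))) : ℕ) : ℝ) * b ≤ M.length :=
    (mul_le_mul_of_nonneg_right (by exact_mod_cast hM.card_image_block_le m) hb₀).trans hb
  obtain ⟨k, -, hk⟩ := hM.pairwise_lt.nodup.exists_le_length_filter_of_nsmul_le
    (fun pr hpr => mem_image_of_mem (Prod.map (block m) (block m)) (List.mem_toFinset.2 hpr))
    (((List.toFinset_nonempty_iff M).2 hMne).image _) (b := b) (by rwa [nsmul_eq_mul])
  exact ⟨k, hk⟩

end

theorem cast_block_add_block_add_one_mul_le {l m : ℕ} (hm : 100 * m < l) :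
    ((block m l + block m l + 1 : ℕ) : ℝ) * (0.99 * (m / 2)) ≤ l := by
  have hdiv : block m l * m + 1 ≤ l := by
    have := Nat.div_mul_le_self (l - 1) m
    rw [block]
    omega
  have hdiv' : ((block m l : ℕ) : ℝ) * m + 1 ≤ l := by exact_mod_cast hdiv
  have : (100 : ℝ) * m < l := by exact_mod_cast hm
  push_cast
  nlinarith

theorem dense_submatching_of_self_matching_general (ε : ℝ) (S : List α) (m : ℕ)
    (hm : 100 * m < S.length) (M : List (ℕ × ℕ)) (hM : IsMatching S S M)
    (hsize : ε * (S.length : ℝ) ≤ (M.length : ℝ)) :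
    ∃ p q : ℕ, ∃ M' : List (ℕ × ℕ),
      1 ≤ p ∧ p + m ≤ S.length + 1 ∧ 1 ≤ q ∧ q + m ≤ S.length + 1 ∧
      IsMatching S S M' ∧
      (∀ pr ∈ M', p ≤ pr.1 ∧ pr.1 < p + m ∧ q ≤ pr.2 ∧ pr.2 < q + m) ∧
      0.99 * ((m : ℝ) * ε / 2) ≤ (M'.length : ℝ) := by
  have hml : m ≤ S.length := by omega
  rcases le_or_gt (0.99 * ((m : ℝ) * ε / 2)) 0 with hb | hb
  · exact ⟨1, 1, [], le_rfl, by omega, le_rfl, by omega, hM.sublist (List.nil_sublist M),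
      by simp, by simpa using hb⟩
  have hm0 : 0 < m := Nat.pos_of_ne_zero fun h => by simp [h] at hb
  have hε : 0 < ε := by
    have : (0 : ℝ) < m := by exact_mod_cast hm0
    nlinarith
  have hMne : M ≠ [] := by
    rintro rfl
    have hl : (0 : ℝ) < S.length := by exact_mod_cast hm0.trans_le hml
    rw [List.length_nil, Nat.cast_zero] at hsize
    exact (mul_pos hε hl).not_ge hsize
  obtain ⟨⟨s, t⟩, hdense⟩ := hM.exists_le_length_filter_block m hMne hb.le (by
    calc _ = ε * (((block m S.length + block m S.length + 1 : ℕ) : ℝ) * (0.99 * (m / 2))) := by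
          ring
      _ ≤ ε * S.length := mul_le_mul_of_nonneg_left (cast_block_add_block_add_one_mul_le hm) hε.le
      _ ≤ M.length := hsize)
  obtain ⟨p, hp1, hpl, hpwin⟩ := exists_window_of_block hm0 hml s
  obtain ⟨q, hq1, hql, hqwin⟩ := exists_window_of_block hm0 hml t
  refine ⟨p, q, _, hp1, hpl, hq1, hql, hM.sublist List.filter_sublist, fun pr hpr => ?_, hdense⟩
  obtain ⟨hprM, hblock⟩ : pr ∈ M ∧ block m pr.1 = s ∧ block m pr.2 = t := by
    simpa [Prod.ext_iff] using hpr
  obtain ⟨h1, h2, h3, h4, -⟩ := hM.2 pr hprM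
  obtain ⟨hp, hp'⟩ := hpwin _ h1 h2 hblock.1
  obtain ⟨hq, hq'⟩ := hqwin _ h3 h4 hblock.2
  exact ⟨hp, hp', hq, hq'⟩

theorem dense_submatching_of_self_matching (ε : ℝ) (S : List α) (m : ℕ)
    (hm : 100 * m < S.length) (M : List (ℕ × ℕ)) (hM : IsMatching S S M)
    (hbad : ∀ p ∈ M, p.1 ≠ p.2) (hsize : ε * (S.length : ℝ) ≤ (M.length : ℝ)) :
    ∃ p q : ℕ, ∃ M' : List (ℕ × ℕ),
      1 ≤ p ∧ p + m ≤ S.length + 1 ∧ 1 ≤ q ∧ q + m ≤ S.length + 1 ∧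
      IsMatching S S M' ∧
      (∀ pr ∈ M', p ≤ pr.1 ∧ pr.1 < p + m ∧ q ≤ pr.2 ∧ pr.2 < q + m) ∧
      0.99 * ((m : ℝ) * ε / 2) ≤ (M'.length : ℝ) :=
  dense_submatching_of_self_matching_general ε S m hm M hM hsize
end
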